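/- Let (X_i)_{i≥1} be i.i.d. ℤ^d-valued random variables whose random walk has escape probability γ ∈ (0,1). Then for every real α ≥ 0, lim_{s↑1} (1−s)² Σ_{n=1}^∞ s^n E(L_n(α)) = γ² Σ_{j=1}^∞ j^α (1−γ)^{j−1}. -/

import Mathlib

open MeasureTheory ProbabilityTheory Filter Topology

/-- The random walk: `S 0 = 0` and `S n = X 1 + ⋯ + X n` (steps indexed from `0`). -/
def walk {Ω : Type*} {d : ℕ} (X : ℕ → Ω → (Fin d → ℤ)) (n : ℕ) (ω : Ω) : Fin d → ℤ :=
  ∑ i ∈ Finset.range n, X i ω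

/-- The local time `ℓ(n,x) = #{0 ≤ i ≤ n : S i = x}`. -/
def localTime {Ω : Type*} {d : ℕ} (X : ℕ → Ω → (Fin d → ℤ)) (n : ℕ) (x : Fin d → ℤ)
    (ω : Ω) : ℕ :=
  ((Finset.range (n + 1)).filter fun i => walk X i ω = x).card

/-- The set of points visited by time `n`. -/
def visited {Ω : Type*} {d : ℕ} (X : ℕ → Ω → (Fin d → ℤ)) (n : ℕ) (ω : Ω) :
    Finset (Fin d → ℤ) :=
  (Finset.range (n + 1)).image fun i => walk X i ω

/-- The steps are i.i.d.: measurable, independent and identically distributed. -/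
def IID {Ω : Type*} {d : ℕ} [MeasurableSpace Ω] (P : Measure Ω)
    (X : ℕ → Ω → (Fin d → ℤ)) : Prop :=
  (∀ i, Measurable (X i)) ∧ iIndepFun X P ∧
    ∀ i, IdentDistrib (X i) (X 0) P P

/-- `L_n(α) = ∑_{x ∈ ℤ^d} ℓ(n,x)^α`, with the convention `0^0 = 0`, so that the sum may be
restricted to the (finitely many) visited points, where the local time is positive. -/
noncomputable def Lfun {Ω : Type*} {d : ℕ} (X : ℕ → Ω → (Fin d → ℤ)) (α : ℝ) (n : ℕ)
    (ω : Ω) : ℝ :=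
  ∑ x ∈ visited X n ω, (localTime X n x ω : ℝ) ^ α

/-!
Each step raises the local time at the current position by one, so
`L_n(α) = ∑_{i ≤ n} g(ℓ(i, S_i))` with `g(k) = k ^ α - (k - 1) ^ α`, and reversing the first `i`
steps gives `E g(ℓ(i, S_i)) = E g(ℓ(i, 0))`. Decomposing at the first return to the origin yields a
renewal equation for `P(ℓ(n, 0) ≥ k)`, whence `P(ℓ(n, 0) ≥ k + 1) → (1 - γ) ^ k`: the total number
of visits to the origin is geometric. By dominated convergence
`E g(ℓ(i, 0)) → ∑_k g(k + 1) γ (1 - γ) ^ k = γ² ∑_k (k + 1) ^ α (1 - γ) ^ k`, and an Abelian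
argument (Abel's limit theorem applied to differences) turns this limit of the increments
`E L_i(α) - E L_{i-1}(α)` into the limit of `(1 - s)² ∑ sⁿ E L_n(α)`.
-/

section Series

open Finset Filter Topology

lemma exists_norm_le_of_tendsto {a : ℕ → ℝ} {A : ℝ} (ha : Tendsto a atTop (𝓝 A)) :
    ∃ M, ∀ n, ‖a n‖ ≤ M := by
  obtain ⟨M, hM⟩ := ha.norm.bddAbove_range
  exact ⟨M, fun n => hM ⟨n, rfl⟩⟩

lemma summable_rpow_mul_geometric (α : ℝ) {c : ℝ} (hc : ‖c‖ < 1) :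
    Summable fun k : ℕ => ((k : ℝ) + 1) ^ α * c ^ k := by
  set m := ⌈α⌉₊
  refine .of_norm_bounded_eventually_nat
    ((summable_norm_pow_mul_geometric_of_norm_lt_one m hc).mul_left (2 ^ m))
    (eventually_ge_atTop 1 |>.mono fun k hk => ?_)
  have hk' : (1 : ℝ) ≤ k := by exact_mod_cast hk
  rw [norm_mul, norm_mul, norm_pow, norm_pow, Real.norm_of_nonneg (by positivity),
    Real.norm_natCast, ← mul_assoc, ← mul_pow]
  gcongr
  calc ((k : ℝ) + 1) ^ α ≤ ((k : ℝ) + 1) ^ (m : ℝ) :=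
        Real.rpow_le_rpow_of_exponent_le (by linarith) (Nat.le_ceil α)
    _ ≤ (2 * k) ^ m := by rw [Real.rpow_natCast]; gcongr; linarith

lemma summable_mul_pow_of_norm_le {b : ℕ → ℝ} {M β s : ℝ}
    (hb : ∀ n, ‖b n‖ ≤ M * ((n : ℝ) + 1) ^ β) (hs : ‖s‖ < 1) : Summable fun n => b n * s ^ n :=
  .of_norm_bounded ((summable_rpow_mul_geometric β (c := ‖s‖) (by rwa [norm_norm])).mul_left M)
    fun n => by
      rw [norm_mul, norm_pow, ← mul_assoc]
      exact mul_le_mul_of_nonneg_right (hb n) (by positivity)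

lemma tsum_sub_mul_geometric_sub {h : ℕ → ℝ} (h0 : h 0 = 0) {c : ℝ}
    (hs : Summable fun k => h (k + 1) * c ^ k) :
    ∑' k, (h (k + 1) - h k) * (c ^ k - c ^ (k + 1))
      = (1 - c) ^ 2 * ∑' k, h (k + 1) * c ^ k := by
  have hs' : Summable fun k => h k * c ^ k :=
    (summable_nat_add_iff 1).1 <| (hs.mul_left c).congr fun k => by ring
  have hshift : ∑' k, h k * c ^ k = c * ∑' k, h (k + 1) * c ^ k := by
    rw [hs'.tsum_eq_zero_add, h0, zero_mul, zero_add, ← tsum_mul_left]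
    exact tsum_congr fun k => by ring
  calc ∑' k, (h (k + 1) - h k) * (c ^ k - c ^ (k + 1))
      = ∑' k, (1 - c) * (h (k + 1) * c ^ k - h k * c ^ k) := tsum_congr fun k => by ring
    _ = (1 - c) * (∑' k, h (k + 1) * c ^ k - ∑' k, h k * c ^ k) := by
        rw [tsum_mul_left, hs.tsum_sub hs']
    _ = (1 - c) ^ 2 * ∑' k, h (k + 1) * c ^ k := by rw [hshift]; ring

lemma tendsto_sum_range_mul_sub {r u : ℕ → ℝ} {U : ℝ} (hr : Summable r)
    (hu : Tendsto u atTop (𝓝 U)) :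
    Tendsto (fun n => ∑ t ∈ range (n + 1), r t * u (n - t)) atTop (𝓝 ((∑' t, r t) * U)) := by
  obtain ⟨C, hC⟩ := exists_norm_le_of_tendsto hu
  let F : ℕ → ℕ → ℝ := fun n t => if t ≤ n then r t * u (n - t) else 0
  have hF : ∀ n, ∑ t ∈ range (n + 1), r t * u (n - t) = ∑' t, F n t := fun n => by
    rw [tsum_eq_sum (s := range (n + 1)) fun t ht => if_neg (by simpa using ht)]
    exact sum_congr rfl fun t ht => (if_pos (Nat.lt_succ_iff.1 (mem_range.1 ht))).symm
  simp_rw [hF, ← tsum_mul_right]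
  refine tendsto_tsum_of_dominated_convergence (bound := fun t => ‖r t‖ * C)
    (hr.norm.mul_right C) (fun t => ?_) (Eventually.of_forall fun n t => ?_)
  · refine Tendsto.congr' (eventually_ge_atTop t |>.mono fun n hn => (if_pos hn).symm) ?_
    exact tendsto_const_nhds.mul (hu.comp (tendsto_sub_atTop_nat t))
  · by_cases ht : t ≤ n
    · simpa [F, ht, norm_mul] using mul_le_mul_of_nonneg_left (hC (n - t)) (norm_nonneg (r t))
    · simpa [F, ht] using mul_nonneg (norm_nonneg (r t)) ((norm_nonneg _).trans (hC 0))

lemma one_sub_mul_tsum {b : ℕ → ℝ} {s : ℝ} (hb : Summable fun n => b n * s ^ n) :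
    (1 - s) * ∑' n, b n * s ^ n = b 0 + ∑' n, (b (n + 1) - b n) * s ^ (n + 1) := by
  have hb1 : Summable fun n => b (n + 1) * s ^ (n + 1) := (summable_nat_add_iff 1).2 hb
  have hb2 : Summable fun n => b n * s ^ (n + 1) := (hb.mul_left s).congr fun n => by ring
  calc (1 - s) * ∑' n, b n * s ^ n = ∑' n, b n * s ^ n - ∑' n, b n * s ^ (n + 1) := by
        rw [sub_mul, one_mul, ← tsum_mul_left]
        exact congrArg _ (tsum_congr fun n => by ring)
    _ = b 0 + ∑' n, (b (n + 1) - b n) * s ^ (n + 1) := by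
        rw [hb.tsum_eq_zero_add, add_sub_assoc, ← hb1.tsum_sub hb2, pow_zero, mul_one]
        exact congrArg _ (tsum_congr fun n => by ring)

/-- Abel's limit theorem applied to the differences of `a`. -/
lemma tendsto_one_sub_mul_tsum {a : ℕ → ℝ} {A : ℝ} (ha : Tendsto a atTop (𝓝 A)) :
    Tendsto (fun s => (1 - s) * ∑' n, a n * s ^ n) (𝓝[<] 1) (𝓝 A) := by
  obtain ⟨M, hM⟩ := exists_norm_le_of_tendsto ha
  let c : ℕ → ℝ := fun n => a n - if n = 0 then 0 else a (n - 1)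
  have hc_succ : ∀ n, c (n + 1) = a (n + 1) - a n := fun n => by simp [c]
  have hc : ∀ n, ∑ i ∈ range (n + 1), c i = a n := fun n => by
    induction n with
    | zero => simp [c]
    | succ n ih => rw [sum_range_succ, ih, hc_succ]; ring
  have habel := Real.tendsto_tsum_powerSeries_nhdsWithin_lt
    ((tendsto_add_atTop_iff_nat 1).1 (ha.congr fun n => (hc n).symm))
  refine habel.congr' ?_
  filter_upwards [Ioo_mem_nhdsLT (show (0 : ℝ) < 1 by norm_num)] with s hs
  have hs' : ‖s‖ < 1 := by rw [Real.norm_of_nonneg hs.1.le]; exact hs.2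
  have hsum : Summable fun n => a n * s ^ n :=
    summable_mul_pow_of_norm_le (β := 0) (fun n => by simpa using hM n) hs'
  have hcsum : Summable fun n => c n * s ^ n := by
    refine (summable_nat_add_iff 1).1 <|
      ((summable_nat_add_iff 1).2 hsum |>.sub (hsum.mul_left s)).congr fun n => ?_
    rw [hc_succ]; ring
  rw [one_sub_mul_tsum hsum, hcsum.tsum_eq_zero_add]
  simp [c, hc_succ]

lemma tendsto_one_sub_sq_mul_tsum_partialSum {a : ℕ → ℝ} {A : ℝ} (ha : Tendsto a atTop (𝓝 A)) :
    Tendsto (fun s => (1 - s) ^ 2 * ∑' n, s ^ (n + 1) * ∑ i ∈ range (n + 2), a i)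
      (𝓝[<] 1) (𝓝 A) := by
  obtain ⟨M, hM⟩ := exists_norm_le_of_tendsto ha
  have hsplit : ∀ s ∈ Set.Ioo (0 : ℝ) 1,
      (1 - s) ^ 2 * ∑' n, s ^ (n + 1) * ∑ i ∈ range (n + 2), a i
        = (1 - s) * ∑' n, a n * s ^ n - (1 - s) ^ 2 * a 0 := fun s hs => by
    let E : ℕ → ℝ := fun n => ∑ i ∈ range (n + 1), a i
    have hs' : ‖s‖ < 1 := by rw [Real.norm_of_nonneg hs.1.le]; exact hs.2
    have hsum : Summable fun n => a n * s ^ n :=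
      summable_mul_pow_of_norm_le (β := 0) (fun n => by simpa using hM n) hs'
    have hE : Summable fun n => E n * s ^ n := summable_mul_pow_of_norm_le (β := 1) (fun n => by
      rw [Real.rpow_one, mul_comm]
      simpa using (norm_sum_le _ _).trans (sum_le_sum fun i (_ : i ∈ range (n + 1)) => hM i)) hs'
    have htel : (1 - s) * ∑' n, E n * s ^ n = ∑' n, a n * s ^ n := by
      rw [one_sub_mul_tsum hE, hsum.tsum_eq_zero_add]
      simp [E, sum_range_succ _ (_ + 1)]
    calc (1 - s) ^ 2 * ∑' n, s ^ (n + 1) * E (n + 1)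
        = (1 - s) * ((1 - s) * ∑' n, E n * s ^ n) - (1 - s) ^ 2 * E 0 := by
          rw [hE.tsum_eq_zero_add]
          simp_rw [mul_comm (s ^ _)]
          ring
      _ = (1 - s) * ∑' n, a n * s ^ n - (1 - s) ^ 2 * a 0 := by rw [htel]; simp [E]
  have hvanish : Tendsto (fun s : ℝ => (1 - s) ^ 2 * a 0) (𝓝[<] 1) (𝓝 0) := by
    have hcont : Continuous fun s : ℝ => (1 - s) ^ 2 * a 0 := by fun_prop
    simpa using (hcont.tendsto 1).mono_left nhdsWithin_le_nhds
  have hlim := (tendsto_one_sub_mul_tsum ha).sub hvanish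
  rw [sub_zero] at hlim
  refine hlim.congr' ?_
  filter_upwards [Ioo_mem_nhdsLT (show (0 : ℝ) < 1 by norm_num)] with s hs
  exact (hsplit s hs).symm

end Series

section NatValued

open Finset MeasureTheory

variable {Ω : Type*} {N : Ω → ℕ} {m : ℕ}

lemma comp_eq_sum_indicator (hm : ∀ ω, N ω ≤ m) (g : ℕ → ℝ) :
    (fun ω => g (N ω)) = fun ω => ∑ k ∈ range (m + 1), (N ⁻¹' {k}).indicator (fun _ => g k) ω := by
  funext ω
  rw [sum_eq_single_of_mem (N ω) (mem_range.2 (Nat.lt_succ_of_le (hm ω)))]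
  · exact (Set.indicator_of_mem rfl _).symm
  · exact fun k _ hk => Set.indicator_of_notMem (Ne.symm hk) _

variable [MeasurableSpace Ω] {P : Measure Ω} [IsFiniteMeasure P]

lemma integrable_comp_of_le (hN : Measurable N) (hm : ∀ ω, N ω ≤ m) (g : ℕ → ℝ) :
    Integrable (fun ω => g (N ω)) P := by
  rw [comp_eq_sum_indicator hm g]
  exact integrable_finsetSum _ fun k _ =>
    (integrable_const _).indicator (hN (measurableSet_singleton k))

lemma integral_comp_eq_sum (hN : Measurable N) (hm : ∀ ω, N ω ≤ m) (g : ℕ → ℝ) :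
    ∫ ω, g (N ω) ∂P = ∑ k ∈ range (m + 1), g k * P.real (N ⁻¹' {k}) := by
  rw [comp_eq_sum_indicator hm g, integral_finsetSum _ fun k _ =>
    (integrable_const _).indicator (hN (measurableSet_singleton k))]
  exact sum_congr rfl fun k _ => by
    rw [integral_indicator_const _ (hN (measurableSet_singleton k)), smul_eq_mul, mul_comm]

end NatValued

namespace IID

variable {Ω : Type*} [MeasurableSpace Ω] {d : ℕ} {P : Measure Ω} {X : ℕ → Ω → (Fin d → ℤ)}

/-- Both sides are the infinite product of the law of a step. -/
lemma map_comp_injective (hiid : IID P X) {e : ℕ → ℕ} (he : e.Injective) :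
    P.map (fun ω i => X (e i) ω) = P.map (fun ω i => X i ω) := by
  have hlaw : ∀ e : ℕ → ℕ, e.Injective →
      P.map (fun ω i => X (e i) ω) = Measure.infinitePi fun _ => P.map (X 0) := fun e he => by
    rw [(hiid.2.1.precomp he).map_fun_eq_infinitePi_map fun i => hiid.1 (e i)]
    exact congrArg _ (funext fun i => (hiid.2.2 (e i)).map_eq)
  rw [hlaw e he]
  exact (hlaw id Function.injective_id).symm

lemma measure_preimage_comp_injective (hiid : IID P X) {e : ℕ → ℕ} (he : e.Injective)
    {S : Set (ℕ → Fin d → ℤ)} (hS : MeasurableSet S) :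
    P ((fun ω i => X (e i) ω) ⁻¹' S) = P ((fun ω i => X i ω) ⁻¹' S) := by
  rw [← Measure.map_apply (measurable_pi_lambda _ fun i => hiid.1 (e i)) hS,
    hiid.map_comp_injective he, Measure.map_apply (measurable_pi_lambda _ hiid.1) hS]

lemma integral_comp_injective (hiid : IID P X) {e : ℕ → ℕ} (he : e.Injective)
    {F : (ℕ → Fin d → ℤ) → ℝ} (hF : Measurable F) :
    ∫ ω, F (fun i => X (e i) ω) ∂P = ∫ ω, F (fun i => X i ω) ∂P := by
  rw [← integral_map (measurable_pi_lambda _ fun i => hiid.1 (e i)).aemeasurable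
      hF.aestronglyMeasurable, hiid.map_comp_injective he,
    integral_map (measurable_pi_lambda _ hiid.1).aemeasurable hF.aestronglyMeasurable]

end IID

namespace RandomWalk

open Finset MeasureTheory ProbabilityTheory Filter Topology

variable {Ω : Type*} {d : ℕ} {X : ℕ → Ω → (Fin d → ℤ)}

section Path

lemma walk_zero (ω : Ω) : walk X 0 ω = 0 := by simp [walk]

lemma walk_add (t m : ℕ) (ω : Ω) :
    walk X (t + m) ω = walk X t ω + walk (fun i => X (t + i)) m ω := by
  simp [walk, sum_range_add]

lemma localTime_eq_sum (n : ℕ) (x : Fin d → ℤ) (ω : Ω) :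
    localTime X n x ω = ∑ i ∈ range (n + 1), if walk X i ω = x then 1 else 0 :=
  card_filter _ _

lemma localTime_succ (n : ℕ) (x : Fin d → ℤ) (ω : Ω) :
    localTime X (n + 1) x ω = localTime X n x ω + if walk X (n + 1) ω = x then 1 else 0 := by
  simp only [localTime_eq_sum, sum_range_succ _ (n + 1)]

lemma localTime_mono (x : Fin d → ℤ) (ω : Ω) : Monotone fun n => localTime X n x ω :=
  monotone_nat_of_le_succ fun n => by rw [localTime_succ]; omega

lemma localTime_le (n : ℕ) (x : Fin d → ℤ) (ω : Ω) : localTime X n x ω ≤ n + 1 :=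
  (card_filter_le _ _).trans (card_range _).le

lemma one_le_localTime_zero (n : ℕ) (ω : Ω) : 1 ≤ localTime X n 0 ω :=
  card_pos.2 ⟨0, by simp [walk_zero]⟩

lemma two_le_localTime_zero_iff {n : ℕ} {ω : Ω} :
    2 ≤ localTime X n 0 ω ↔ ∃ m, 0 < m ∧ m ≤ n ∧ walk X m ω = 0 := by
  constructor
  · intro h
    obtain ⟨m, hm, hm0⟩ := exists_mem_ne h 0
    simp only [mem_filter, mem_range] at hm
    exact ⟨m, Nat.pos_of_ne_zero hm0, by omega, hm.2⟩
  · rintro ⟨m, hm0, hmn, hm⟩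
    have hsub : {0, m} ⊆ (range (n + 1)).filter fun i => walk X i ω = 0 := by
      intro i hi
      rcases mem_insert.1 hi with rfl | hi
      · simp [walk_zero]
      · rw [mem_singleton.1 hi]; simp [hm]; omega
    simpa [localTime, card_pair hm0.ne] using card_le_card hsub

lemma localTime_add (t m : ℕ) (x : Fin d → ℤ) (ω : Ω) :
    localTime X (t + m) x ω = ((range t).filter fun i => walk X i ω = x).card
      + localTime (fun i => X (t + i)) m (x - walk X t ω) ω := by
  unfold localTime
  rw [add_assoc, range_add, filter_union, card_union_of_disjoint
    (disjoint_filter_filter (disjoint_range_addLeftEmbedding t _)), filter_map, card_map]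
  congr 2
  ext i
  simp [walk_add, eq_sub_iff_add_eq, add_comm]

def firstReturn (X : ℕ → Ω → (Fin d → ℤ)) (t : ℕ) : Set Ω :=
  {ω | 0 < t ∧ walk X t ω = 0 ∧ ∀ m, 0 < m → m < t → walk X m ω ≠ 0}

lemma pairwiseDisjoint_firstReturn (s : Set ℕ) : s.PairwiseDisjoint (firstReturn X) := by
  intro t _ t' _ hne
  refine Set.disjoint_left.2 fun ω ⟨ht, hωt, hbt⟩ ⟨ht', hωt', hbt'⟩ => ?_
  rcases lt_or_gt_of_ne hne with h | h
  · exact hbt' t ht h hωt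
  · exact hbt t' ht' h hωt'

lemma exists_mem_firstReturn {n : ℕ} {ω : Ω} (h : ∃ m, 0 < m ∧ m ≤ n ∧ walk X m ω = 0) :
    ∃ t ≤ n, ω ∈ firstReturn X t := by
  classical
  have hex : ∃ m, 0 < m ∧ walk X m ω = 0 := by obtain ⟨m, h0, -, hm⟩ := h; exact ⟨m, h0, hm⟩
  obtain ⟨m, h0, hmn, hm⟩ := h
  refine ⟨Nat.find hex, (Nat.find_min' hex ⟨h0, hm⟩).trans hmn, (Nat.find_spec hex).1,
    (Nat.find_spec hex).2, fun j hj hjt hw => Nat.find_min hex hjt ⟨hj, hw⟩⟩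

lemma localTime_zero_of_mem_firstReturn {t : ℕ} {ω : Ω} (h : ω ∈ firstReturn X t) (m : ℕ) :
    localTime X (t + m) 0 ω = localTime (fun i => X (t + i)) m 0 ω + 1 := by
  obtain ⟨ht, hωt, hbt⟩ := h
  have hzeros : ((range t).filter fun i => walk X i ω = 0) = {0} := by
    ext i
    simp only [mem_filter, mem_range, mem_singleton]
    refine ⟨fun ⟨hi, hw⟩ => by_contra fun h0 => hbt i (Nat.pos_of_ne_zero h0) hi hw,
      fun hi => ⟨hi ▸ ht, hi ▸ walk_zero ω⟩⟩
  rw [localTime_add, hzeros, card_singleton, hωt, sub_zero, add_comm]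

lemma setOf_succ_le_localTime_zero {k : ℕ} (hk : 1 ≤ k) (n : ℕ) :
    {ω | k + 1 ≤ localTime X n 0 ω} = ⋃ t ∈ range (n + 1),
      firstReturn X t ∩ {ω | k ≤ localTime (fun i => X (t + i)) (n - t) 0 ω} := by
  ext ω
  simp only [Set.mem_ofPred_eq, Set.mem_iUnion, Set.mem_inter_iff, mem_range, Nat.lt_succ_iff,
    exists_prop]
  constructor
  · intro h
    have h2 : 2 ≤ localTime X n 0 ω := by omega
    obtain ⟨t, htn, hω⟩ := exists_mem_firstReturn (two_le_localTime_zero_iff.1 h2)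
    have := localTime_zero_of_mem_firstReturn hω (n - t)
    rw [Nat.add_sub_cancel' htn] at this
    exact ⟨t, htn, hω, by omega⟩
  · rintro ⟨t, htn, hω, hk⟩
    have := localTime_zero_of_mem_firstReturn hω (n - t)
    rw [Nat.add_sub_cancel' htn] at this
    omega

def revPrefix (i j : ℕ) : ℕ := if j < i then i - 1 - j else j

lemma revPrefix_injective (i : ℕ) : Function.Injective (revPrefix i) := by
  intro j j' h
  unfold revPrefix at h
  split_ifs at h <;> omega

lemma walk_revPrefix {i m : ℕ} (hm : m ≤ i) (ω : Ω) :
    walk (fun j => X (revPrefix i j)) m ω = walk X i ω - walk X (i - m) ω := by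
  have hsteps : walk (fun j => X (revPrefix i j)) m ω = walk (fun j => X (i - m + j)) m ω := by
    rw [walk, walk, ← sum_range_reflect]
    refine sum_congr rfl fun j hj => ?_
    rw [mem_range] at hj
    rw [revPrefix, if_pos (by omega)]
    congr 2
    omega
  rw [hsteps, eq_sub_iff_add_eq', ← walk_add, Nat.sub_add_cancel hm]

lemma localTime_revPrefix (i : ℕ) (ω : Ω) :
    localTime (fun j => X (revPrefix i j)) i (walk (fun j => X (revPrefix i j)) i ω) ω
      = localTime X i 0 ω := by
  rw [localTime_eq_sum, localTime_eq_sum, ← sum_range_reflect]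
  refine sum_congr rfl fun m hm => ?_
  rw [mem_range] at hm
  rw [show i + 1 - 1 - m = i - m by omega, walk_revPrefix (by omega), walk_revPrefix le_rfl,
    Nat.sub_sub_self (by omega), Nat.sub_self, walk_zero, sub_zero]
  simp only [sub_eq_self]

end Path

section Power

variable {α : ℝ}

/-- `k ^ α` with the convention `0 ^ 0 = 0` (`Real.rpow` has `0 ^ 0 = 1`). -/
noncomputable def natRpow (α : ℝ) (k : ℕ) : ℝ := if k = 0 then 0 else (k : ℝ) ^ α

noncomputable def natRpowIncr (α : ℝ) (k : ℕ) : ℝ := natRpow α k - natRpow α (k - 1)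

lemma natRpow_succ (α : ℝ) (k : ℕ) : natRpow α (k + 1) = ((k : ℝ) + 1) ^ α := by
  simp [natRpow]

lemma natRpow_nonneg (α : ℝ) (k : ℕ) : 0 ≤ natRpow α k := by
  unfold natRpow; split_ifs <;> positivity

lemma natRpow_mono (hα : 0 ≤ α) : Monotone (natRpow α) := by
  intro k k' hk
  unfold natRpow
  split_ifs with h h'
  · exact le_rfl
  · positivity
  · omega
  · exact Real.rpow_le_rpow (Nat.cast_nonneg k) (Nat.cast_le.2 hk) hα

lemma natRpowIncr_succ (α : ℝ) (k : ℕ) :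
    natRpowIncr α (k + 1) = natRpow α (k + 1) - natRpow α k :=
  rfl

lemma natRpowIncr_nonneg (hα : 0 ≤ α) (k : ℕ) : 0 ≤ natRpowIncr α k :=
  sub_nonneg.2 (natRpow_mono hα (Nat.sub_le k 1))

lemma natRpowIncr_le (α : ℝ) (k : ℕ) : natRpowIncr α k ≤ natRpow α k :=
  sub_le_self _ (natRpow_nonneg α _)

lemma mem_visited_iff {n : ℕ} {x : Fin d → ℤ} {ω : Ω} :
    x ∈ visited X n ω ↔ localTime X n x ω ≠ 0 := by
  rw [localTime, Ne, card_eq_zero, ← not_nonempty_iff_eq_empty, not_not, filter_nonempty_iff]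
  simp [visited, eq_comm]

lemma visited_subset_succ (n : ℕ) (ω : Ω) : visited X n ω ⊆ visited X (n + 1) ω :=
  image_subset_image (range_subset_range.2 (Nat.le_succ _))

lemma Lfun_eq_sum_natRpow {n : ℕ} {ω : Ω} {s : Finset (Fin d → ℤ)} (hs : visited X n ω ⊆ s) :
    Lfun X α n ω = ∑ x ∈ s, natRpow α (localTime X n x ω) := by
  rw [Lfun, ← sum_subset hs fun x _ hx => by simp [natRpow, not_not.1 (mt mem_visited_iff.2 hx)]]
  exact sum_congr rfl fun x hx => by simp [natRpow, mem_visited_iff.1 hx]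

lemma Lfun_succ (α : ℝ) (n : ℕ) (ω : Ω) :
    Lfun X α (n + 1) ω
      = Lfun X α n ω + natRpowIncr α (localTime X (n + 1) (walk X (n + 1) ω) ω) := by
  set V := visited X (n + 1) ω
  have hS : walk X (n + 1) ω ∈ V := mem_image_of_mem _ (self_mem_range_succ _)
  rw [Lfun_eq_sum_natRpow (subset_refl V), Lfun_eq_sum_natRpow (visited_subset_succ n ω),
    ← sub_eq_iff_eq_add', ← sum_sub_distrib, sum_eq_single_of_mem _ hS fun x _ hx => ?_]
  · simp [natRpowIncr, localTime_succ]
  · simp [localTime_succ, Ne.symm hx]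

lemma Lfun_eq_sum_natRpowIncr (α : ℝ) (n : ℕ) (ω : Ω) :
    Lfun X α n ω = ∑ i ∈ range (n + 1), natRpowIncr α (localTime X i (walk X i ω) ω) := by
  induction n with
  | zero => simp [Lfun, visited, localTime, natRpowIncr, natRpow, filter_singleton]
  | succ n ih => rw [Lfun_succ, ih, sum_range_succ _ (n + 1)]

end Power

section Measurability

variable {mΩ : MeasurableSpace Ω}

lemma measurable_walk {n : ℕ} (hX : ∀ i < n, Measurable (X i)) : Measurable (walk X n) :=
  measurable_sum _ fun i hi => hX i (mem_range.1 hi)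

lemma measurable_localTime {n : ℕ} {x : Ω → Fin d → ℤ} (hX : ∀ i < n, Measurable (X i))
    (hx : Measurable x) : Measurable fun ω => localTime X n (x ω) ω := by
  simp_rw [localTime_eq_sum]
  refine measurable_sum _ fun i hi => Measurable.ite ?_ measurable_const measurable_const
  exact measurableSet_eq_fun (measurable_walk fun j hj => hX j (by simp at hi; omega)) hx

lemma measurableSet_le_localTime {k n : ℕ} (hX : ∀ i < n, Measurable (X i)) :
    MeasurableSet {ω | k ≤ localTime X n 0 ω} :=
  measurable_localTime hX measurable_const measurableSet_Ici

lemma measurableSet_firstReturn {t : ℕ} (hX : ∀ i < t, Measurable (X i)) :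
    MeasurableSet (firstReturn X t) := by
  have hwalk : ∀ m ≤ t, MeasurableSet {ω | walk X m ω = 0} := fun m hm =>
    measurable_walk (fun i hi => hX i (by omega)) (measurableSet_singleton 0)
  simp only [firstReturn, Set.ofPred_and, Set.ofPred_forall]
  exact (MeasurableSet.const _).inter ((hwalk t le_rfl).inter <| .iInter fun m => .iInter fun _ =>
    .iInter fun hmt => (hwalk m hmt.le).compl)

end Measurability

variable [MeasurableSpace Ω] {P : Measure Ω} {α : ℝ}

/-- Markov property at time `t`: `firstReturn X t` depends only on the steps before `t`, which are
independent of the later ones, and the walk restarted at `t` has the law of the walk. -/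
lemma measure_firstReturn_inter (hiid : IID P X) (t k m : ℕ) :
    P (firstReturn X t ∩ {ω | k ≤ localTime (fun i => X (t + i)) m 0 ω})
      = P (firstReturn X t) * P {ω | k ≤ localTime X m 0 ω} := by
  let σ : ℕ → MeasurableSpace Ω := fun j => MeasurableSpace.comap (X j) inferInstance
  have hpast : ∀ j < t, Measurable[⨆ j ∈ Set.Iio t, σ j] (X j) := fun j hj =>
    Measurable.of_comap_le (le_iSup₂ (f := fun j (_ : j ∈ Set.Iio t) => σ j) j hj)
  have hfuture : ∀ i, Measurable[⨆ j ∈ Set.Ici t, σ j] (X (t + i)) := fun i =>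
    Measurable.of_comap_le (le_iSup₂ (f := fun j (_ : j ∈ Set.Ici t) => σ j) (t + i)
      (Set.mem_Ici.2 (Nat.le_add_right t i)))
  have hindep := indep_iSup_of_disjoint (fun j => (hiid.1 j).comap_le)
    ((iIndepFun_iff_iIndep _ _ _).1 hiid.2.1) (Set.Iio_disjoint_Ici (le_refl t))
  rw [(Indep_iff _ _ P).1 hindep _ _ (measurableSet_firstReturn hpast)
    (measurableSet_le_localTime fun i _ => hfuture i)]
  congr 1
  exact hiid.measure_preimage_comp_injective (add_right_injective t)
    (measurableSet_le_localTime fun i _ => measurable_pi_apply i)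

noncomputable def meanIncr (P : Measure Ω) (X : ℕ → Ω → (Fin d → ℤ)) (α : ℝ) (i : ℕ) : ℝ :=
  ∫ ω, natRpowIncr α (localTime X i (walk X i ω) ω) ∂P

lemma meanIncr_eq (hiid : IID P X) (i : ℕ) :
    meanIncr P X α i = ∫ ω, natRpowIncr α (localTime X i 0 ω) ∂P := by
  let F : (ℕ → Fin d → ℤ) → ℝ := fun v =>
    natRpowIncr α (localTime (fun j v => v j) i (walk (fun j v => v j) i v) v)
  have hF : Measurable F := (measurable_from_nat (f := natRpowIncr α)).comp <|
    measurable_localTime (n := i) (fun j _ => measurable_pi_apply j)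
      (measurable_walk (n := i) fun j _ => measurable_pi_apply j)
  calc meanIncr P X α i = ∫ ω, F (fun j => X j ω) ∂P := rfl
    _ = ∫ ω, F (fun j => X (revPrefix i j) ω) ∂P :=
        (hiid.integral_comp_injective (revPrefix_injective i) hF).symm
    _ = _ := integral_congr_ae <| Eventually.of_forall fun ω =>
        congrArg (natRpowIncr α) (localTime_revPrefix i ω)

noncomputable def tailProb (P : Measure Ω) (X : ℕ → Ω → (Fin d → ℤ)) (k n : ℕ) : ℝ :=
  P.real {ω | k ≤ localTime X n 0 ω}

noncomputable def firstReturnProb (P : Measure Ω) (X : ℕ → Ω → (Fin d → ℤ)) (t : ℕ) : ℝ :=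
  P.real (firstReturn X t)

variable [IsProbabilityMeasure P]

lemma tailProb_one (n : ℕ) : tailProb P X 1 n = 1 := by
  simp [tailProb, one_le_localTime_zero]

lemma monotone_tailProb (k : ℕ) : Monotone (tailProb P X k) := fun _ _ hnm =>
  measureReal_mono fun ω (hω : k ≤ _) => hω.trans (localTime_mono 0 ω hnm)

lemma tailProb_succ (hiid : IID P X) {k : ℕ} (hk : 1 ≤ k) (n : ℕ) :
    tailProb P X (k + 1) n
      = ∑ t ∈ range (n + 1), firstReturnProb P X t * tailProb P X k (n - t) := by
  rw [tailProb, setOf_succ_le_localTime_zero hk, measureReal_biUnion_finset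
    ((pairwiseDisjoint_firstReturn _).mono fun t => Set.inter_subset_left)
    fun t _ => (measurableSet_firstReturn fun i _ => hiid.1 i).inter
      (measurableSet_le_localTime fun i _ => hiid.1 (t + i))]
  refine sum_congr rfl fun t _ => ?_
  simp only [measureReal_def, measure_firstReturn_inter hiid, ENNReal.toReal_mul]
  rfl

lemma summable_firstReturnProb (hX : ∀ i, Measurable (X i)) :
    Summable (firstReturnProb P X) := by
  refine summable_of_sum_range_le (c := 1) (fun t => measureReal_nonneg) fun n => ?_
  simp only [firstReturnProb]
  rw [← measureReal_biUnion_finset (pairwiseDisjoint_firstReturn _)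
    fun t _ => measurableSet_firstReturn fun i _ => hX i]
  exact measureReal_le_one

lemma tendsto_tailProb (hiid : IID P X) (k : ℕ) :
    Tendsto (tailProb P X (k + 1)) atTop (𝓝 ((∑' t, firstReturnProb P X t) ^ k)) := by
  induction k with
  | zero => simp [funext (tailProb_one (P := P) (X := X))]
  | succ k ih =>
    rw [pow_succ']
    refine (tendsto_sum_range_mul_sub (summable_firstReturnProb hiid.1) ih).congr fun n => ?_
    rw [tailProb_succ hiid (Nat.le_add_left 1 k)]

lemma tailProb_le (hiid : IID P X) (k n : ℕ) :
    tailProb P X (k + 1) n ≤ (∑' t, firstReturnProb P X t) ^ k :=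
  (monotone_tailProb (k + 1)).ge_of_tendsto (tendsto_tailProb hiid k) n

lemma measureReal_escape (hiid : IID P X) :
    P.real {ω | ∀ n, 1 ≤ n → walk X n ω ≠ 0} = 1 - ∑' t, firstReturnProb P X t := by
  let C : ℕ → Set Ω := fun n => {ω | 2 ≤ localTime X n 0 ω}ᶜ
  have hC : {ω | ∀ n, 1 ≤ n → walk X n ω ≠ 0} = ⋂ n, C n := by
    ext ω
    simp only [C, Set.mem_iInter, Set.mem_compl_iff, Set.mem_ofPred_eq,
      two_le_localTime_zero_iff]
    exact ⟨fun h n ⟨m, hm, _, hw⟩ => h m hm hw, fun h m hm hw => h m ⟨m, hm, le_rfl, hw⟩⟩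
  have hCmeas : ∀ n, MeasurableSet (C n) := fun n =>
    (measurableSet_le_localTime fun i _ => hiid.1 i).compl
  have hlim : Tendsto (fun n => P.real (C n)) atTop (𝓝 (P.real (⋂ n, C n))) :=
    (ENNReal.tendsto_toReal (measure_ne_top _ _)).comp <| tendsto_measure_iInter_atTop
      (fun n => (hCmeas n).nullMeasurableSet)
      (fun n m hnm => Set.compl_subset_compl.2 fun ω (hω : 2 ≤ _) => hω.trans
        (localTime_mono 0 ω hnm)) ⟨0, measure_ne_top _ _⟩
  have hlim' : Tendsto (fun n => P.real (C n)) atTop (𝓝 (1 - ∑' t, firstReturnProb P X t)) := by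
    simp_rw [C, probReal_compl_eq_one_sub (measurableSet_le_localTime fun i _ => hiid.1 i)]
    simpa [tailProb] using (tendsto_tailProb hiid 1).const_sub 1
  rw [hC]
  exact tendsto_nhds_unique hlim hlim'

lemma integral_Lfun (hX : ∀ i, Measurable (X i)) (n : ℕ) :
    ∫ ω, Lfun X α n ω ∂P = ∑ i ∈ range (n + 1), meanIncr P X α i := by
  simp_rw [Lfun_eq_sum_natRpowIncr]
  exact integral_finsetSum _ fun i _ => integrable_comp_of_le
    (measurable_localTime (fun j _ => hX j) (measurable_walk fun j _ => hX j))
    (fun ω => localTime_le i _ ω) _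

lemma measureReal_localTime_eq (hX : ∀ i, Measurable (X i)) (k n : ℕ) :
    P.real ((fun ω => localTime X n 0 ω) ⁻¹' {k + 1})
      = tailProb P X (k + 1) n - tailProb P X (k + 2) n := by
  have hsplit : {ω | k + 1 ≤ localTime X n 0 ω}
      = (fun ω => localTime X n 0 ω) ⁻¹' {k + 1} ∪ {ω | k + 2 ≤ localTime X n 0 ω} := by
    ext ω; simp only [Set.mem_union, Set.mem_preimage, Set.mem_singleton_iff, Set.mem_ofPred_eq]
    omega
  rw [tailProb, tailProb, hsplit, measureReal_union (Set.disjoint_left.2 fun ω h1 h2 => by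
    simp only [Set.mem_preimage, Set.mem_singleton_iff, Set.mem_ofPred_eq] at h1 h2; omega)
    (measurableSet_le_localTime fun i _ => hX i)]
  ring

/-- The number of visits to the origin is geometric in the limit,
`P(ℓ(i, 0) = k + 1) → f ^ k (1 - f)`; pass to the limit by dominated convergence. -/
lemma tendsto_meanIncr (hiid : IID P X) (hα : 0 ≤ α) (hf : ∑' t, firstReturnProb P X t < 1) :
    Tendsto (meanIncr P X α) atTop (𝓝 ((1 - ∑' t, firstReturnProb P X t) ^ 2 *
      ∑' k : ℕ, ((k : ℝ) + 1) ^ α * (∑' t, firstReturnProb P X t) ^ k)) := by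
  set f := ∑' t, firstReturnProb P X t
  have hf0 : 0 ≤ f := tsum_nonneg fun t => measureReal_nonneg
  let p : ℕ → ℕ → ℝ := fun i k => P.real ((fun ω => localTime X i 0 ω) ⁻¹' {k + 1})
  have hmeas : ∀ i, Measurable fun ω => localTime X i 0 ω := fun i =>
    measurable_localTime (fun j _ => hiid.1 j) measurable_const
  have hrep : ∀ i, meanIncr P X α i = ∑' k, natRpowIncr α (k + 1) * p i k := fun i => by
    rw [meanIncr_eq hiid, integral_comp_eq_sum (hmeas i) (fun ω => localTime_le i 0 ω),
      sum_range_succ', tsum_eq_sum (s := range (i + 1)) fun k hk => ?_]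
    · simp [natRpowIncr, p]
    · have hempty : (fun ω => localTime X i 0 ω) ⁻¹' {k + 1} = ∅ :=
        Set.eq_empty_of_forall_notMem fun ω hω => by
          have := localTime_le (X := X) i 0 ω
          simp only [Set.mem_preimage, Set.mem_singleton_iff] at hω
          simp only [mem_range] at hk
          omega
      simp [p, hempty]
  have hsum := summable_rpow_mul_geometric α (c := f) (by rwa [Real.norm_of_nonneg hf0])
  have hlim := tendsto_tsum_of_dominated_convergence hsum
    (f := fun i k => natRpowIncr α (k + 1) * p i k)
    (fun k => tendsto_const_nhds.mul <| by
      simp_rw [p, measureReal_localTime_eq hiid.1]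
      exact (tendsto_tailProb hiid k).sub (tendsto_tailProb hiid (k + 1)))
    (Eventually.of_forall fun i k => by
      rw [Real.norm_of_nonneg (mul_nonneg (natRpowIncr_nonneg hα _) measureReal_nonneg),
        ← natRpow_succ]
      refine mul_le_mul (natRpowIncr_le α _) ?_ measureReal_nonneg (natRpow_nonneg α _)
      exact (measureReal_mono fun ω (hω : _ = k + 1) => hω.ge).trans (tailProb_le hiid k i))
  have hvalue : ∑' k, natRpowIncr α (k + 1) * (f ^ k - f ^ (k + 1))
      = (1 - f) ^ 2 * ∑' k : ℕ, ((k : ℝ) + 1) ^ α * f ^ k := by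
    simp_rw [natRpowIncr_succ, ← natRpow_succ]
    exact tsum_sub_mul_geometric_sub (by simp [natRpow]) (by simpa only [natRpow_succ] using hsum)
  rw [← hvalue]
  exact hlim.congr fun i => (hrep i).symm

end RandomWalk

theorem statement12_general {Ω : Type*} [MeasurableSpace Ω] (P : Measure Ω) [IsProbabilityMeasure P]
    {d : ℕ} (X : ℕ → Ω → (Fin d → ℤ)) (hiid : IID P X) (γ : ℝ)
    (hγ : (P {ω | ∀ n, 1 ≤ n → walk X n ω ≠ 0}).toReal = γ)
    (hγ0 : 0 < γ) (α : ℝ) (hα : 0 ≤ α) :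
    Tendsto
      (fun s : ℝ => (1 - s) ^ 2 * ∑' n : ℕ, s ^ (n + 1) * ∫ ω, Lfun X α (n + 1) ω ∂P)
      (𝓝[<] 1) (𝓝 (γ ^ 2 * ∑' j : ℕ, ((j : ℝ) + 1) ^ α * (1 - γ) ^ j)) := by
  have hreturn : ∑' t, RandomWalk.firstReturnProb P X t = 1 - γ := by
    rw [← hγ, ← measureReal_def, RandomWalk.measureReal_escape hiid, sub_sub_cancel]
  have hmean := RandomWalk.tendsto_meanIncr hiid hα (by rw [hreturn]; linarith)
  rw [hreturn, sub_sub_cancel] at hmean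
  simpa only [RandomWalk.integral_Lfun hiid.1] using tendsto_one_sub_sq_mul_tsum_partialSum hmean

/-- **Abelian asymptotics of the generating function of `(E(L_n(α)))_{n ≥ 1}`:**
`(1−s)² ∑_{n ≥ 1} s^n E(L_n(α)) → γ² ∑_{j ≥ 1} j^α (1−γ)^{j−1}` as `s ↑ 1`. -/
theorem statement12 {Ω : Type*} [MeasurableSpace Ω] (P : Measure Ω) [IsProbabilityMeasure P]
    {d : ℕ} (X : ℕ → Ω → (Fin d → ℤ)) (hiid : IID P X) (γ : ℝ)
    (hγ : (P {ω | ∀ n, 1 ≤ n → walk X n ω ≠ 0}).toReal = γ)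
    (hγ0 : 0 < γ) (hγ1 : γ < 1) (α : ℝ) (hα : 0 ≤ α) :
    Tendsto
      (fun s : ℝ => (1 - s) ^ 2 * ∑' n : ℕ, s ^ (n + 1) * ∫ ω, Lfun X α (n + 1) ω ∂P)
      (𝓝[<] 1) (𝓝 (γ ^ 2 * ∑' j : ℕ, ((j : ℝ) + 1) ^ α * (1 - γ) ^ j)) :=
  statement12_general P X hiid γ hγ hγ0 α hα
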